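/- arXiv:1402.4577 — 8 statements merged into one kernel-verified Lean document; each statement's English description precedes it below -/
import Mathlib

section
/- Let {Z_n} be a nonnegative supermartingale bounded by 1 with respect to a filtration {F_n}, and let {T_m} be an increasing sequence of stopping times such that E[Z_{T_{m+1}} | F_{T_m}] ≤ (1-ε)·Z_{T_m} for all m ≥ 0, where ε ∈ (0,1). Then for all n, m ≥ 0, E[Z_n] ≤ (1-ε)^m + P[T_m ≥ n]. -/
/-!
Optional stopping at the bounded time `T m ⊓ n` gives `E[Z n] ≤ E[Z (T m ⊓ n)]`, and since
`0 ≤ Z ≤ 1` the latter is at most `E[Z (T m)] + P[n ≤ T m]`. Integrating the contraction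
hypothesis gives `E[Z (T (m + 1))] ≤ (1 - ε) E[Z (T m)]`, hence `E[Z (T m)] ≤ (1 - ε) ^ m`.
-/

open MeasureTheory Set

namespace MeasureTheory

variable {Ω : Type*} {m0 : MeasurableSpace Ω} {μ : Measure Ω}

theorem integral_le_pow_mul_integral_of_condExp_le [IsFiniteMeasure μ] {X : ℕ → Ω → ℝ}
    {𝒢 : ℕ → MeasurableSpace Ω} {c : ℝ} (hc : 0 ≤ c) (h𝒢 : ∀ m, 𝒢 m ≤ m0)
    (hX : ∀ m, Integrable (X m) μ) (hcontr : ∀ m, μ[X (m + 1) | 𝒢 m] ≤ᵐ[μ] fun ω => c * X m ω)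
    (m : ℕ) : ∫ ω, X m ω ∂μ ≤ c ^ m * ∫ ω, X 0 ω ∂μ := by
  induction m with
  | zero => simp
  | succ m ih =>
    calc ∫ ω, X (m + 1) ω ∂μ = ∫ ω, (μ[X (m + 1) | 𝒢 m]) ω ∂μ := (integral_condExp (h𝒢 m)).symm
      _ ≤ ∫ ω, c * X m ω ∂μ := integral_mono_ae integrable_condExp ((hX m).const_mul c) (hcontr m)
      _ = c * ∫ ω, X m ω ∂μ := integral_const_mul c _
      _ ≤ c * (c ^ m * ∫ ω, X 0 ω ∂μ) := mul_le_mul_of_nonneg_left ih hc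
      _ = c ^ (m + 1) * ∫ ω, X 0 ω ∂μ := by ring

variable {ℱ : Filtration ℕ m0} {τ : Ω → ℕ}

theorem IsStoppingTime.coe_min_const (hτ : IsStoppingTime ℱ fun ω => (τ ω : WithTop ℕ)) (n : ℕ) :
    IsStoppingTime ℱ fun ω => ((min (τ ω) n : ℕ) : WithTop ℕ) := by
  have h : (fun ω => ((min (τ ω) n : ℕ) : WithTop ℕ)) = fun ω => min (τ ω : WithTop ℕ) n :=
    funext fun ω => WithTop.coe_min _ _
  rw [h]
  exact hτ.min_const n

theorem StronglyAdapted.integrable_comp_stoppingTime [IsFiniteMeasure μ] {u : ℕ → Ω → ℝ}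
    (hu : StronglyAdapted ℱ u) (hτ : IsStoppingTime ℱ fun ω => (τ ω : WithTop ℕ)) {C : ℝ}
    (hC : ∀ n ω, ‖u n ω‖ ≤ C) : Integrable (fun ω => u (τ ω) ω) μ :=
  .of_bound ((measurable_stoppedValue hu.isStronglyProgressive_of_discrete hτ).mono
    hτ.measurableSpace_le le_rfl).aestronglyMeasurable C (ae_of_all _ fun ω => hC _ ω)

theorem Supermartingale.integral_le_integral_min_const [IsFiniteMeasure μ] {f : ℕ → Ω → ℝ}
    (hf : Supermartingale f ℱ μ) (hτ : IsStoppingTime ℱ fun ω => (τ ω : WithTop ℕ)) (n : ℕ) :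
    ∫ ω, f n ω ∂μ ≤ ∫ ω, f (min (τ ω) n) ω ∂μ := by
  have := hf.neg.expected_stoppedValue_mono (hτ.coe_min_const n) (isStoppingTime_const ℱ n)
    (fun ω => WithTop.coe_le_coe.mpr (min_le_right _ _)) (N := n) fun _ => le_rfl
  simp only [stoppedValue, Pi.neg_apply, integral_neg, neg_le_neg_iff] at this
  exact this

theorem StronglyAdapted.integral_min_const_le_add_measureReal [IsFiniteMeasure μ]
    {u : ℕ → Ω → ℝ} (hu : StronglyAdapted ℱ u) (h0 : ∀ n ω, 0 ≤ u n ω) (h1 : ∀ n ω, u n ω ≤ 1)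
    (hτ : IsStoppingTime ℱ fun ω => (τ ω : WithTop ℕ)) (n : ℕ) :
    ∫ ω, u (min (τ ω) n) ω ∂μ ≤ ∫ ω, u (τ ω) ω ∂μ + μ.real {ω | n ≤ τ ω} := by
  have hnorm : ∀ k ω, ‖u k ω‖ ≤ 1 := fun k ω => by
    rw [Real.norm_of_nonneg (h0 k ω)]; exact h1 k ω
  have hset : MeasurableSet {ω | n ≤ τ ω} := hτ.measurable'.untopA measurableSet_Ici
  have hpt : ∀ ω, u (min (τ ω) n) ω ≤ u (τ ω) ω + {ω | n ≤ τ ω}.indicator 1 ω := fun ω => by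
    by_cases h : n ≤ τ ω
    · simp only [min_eq_right h, indicator_of_mem (show ω ∈ {ω | n ≤ τ ω} from h), Pi.one_apply]
      linarith [h1 n ω, h0 (τ ω) ω]
    · simp [min_eq_left (not_le.1 h).le, h]
  have hint := hu.integrable_comp_stoppingTime (μ := μ) hτ hnorm
  have hind : Integrable ({ω | n ≤ τ ω}.indicator (1 : Ω → ℝ)) μ :=
    (integrable_const 1).indicator hset
  calc ∫ ω, u (min (τ ω) n) ω ∂μ
      ≤ ∫ ω, (u (τ ω) ω + {ω | n ≤ τ ω}.indicator 1 ω) ∂μ :=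
        integral_mono (hu.integrable_comp_stoppingTime (hτ.coe_min_const n) hnorm)
          (hint.add hind) hpt
    _ = ∫ ω, u (τ ω) ω ∂μ + μ.real {ω | n ≤ τ ω} := by
        rw [integral_add hint hind, integral_indicator_one hset]

end MeasureTheory

theorem supermartingale_coupling_bound_general
    {Ω : Type*} {m0 : MeasurableSpace Ω} {μ : Measure Ω} [IsProbabilityMeasure μ]
    (ℱ : Filtration ℕ m0) (Z : ℕ → Ω → ℝ) (T : ℕ → Ω → ℕ) (ε : ℝ)
    (hε : ε ∈ Set.Ioo (0 : ℝ) 1)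
    (hsup : Supermartingale Z ℱ μ)
    (hnonneg : ∀ n ω, 0 ≤ Z n ω)
    (hbdd : ∀ n ω, Z n ω ≤ 1)
    (hT : ∀ m, IsStoppingTime ℱ (fun ω => (T m ω : WithTop ℕ)))
    (hcontr : ∀ m,
      μ[(fun ω => Z (T (m + 1) ω) ω) | (hT m).measurableSpace]
        ≤ᵐ[μ] fun ω => (1 - ε) * Z (T m ω) ω) :
    ∀ n m : ℕ, ∫ ω, Z n ω ∂μ ≤ (1 - ε) ^ m + (μ {ω | n ≤ T m ω}).toReal := by
  intro n m
  have hint : ∀ k, Integrable (fun ω => Z (T k ω) ω) μ := fun k =>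
    hsup.stronglyAdapted.integrable_comp_stoppingTime (hT k) fun n ω => by
      rw [Real.norm_of_nonneg (hnonneg n ω)]; exact hbdd n ω
  have hgeom := integral_le_pow_mul_integral_of_condExp_le (X := fun k ω => Z (T k ω) ω)
    (sub_nonneg.2 hε.2.le) (fun k => (hT k).measurableSpace_le) hint hcontr m
  have hstart : ∫ ω, Z (T 0 ω) ω ∂μ ≤ 1 := by
    simpa using integral_mono (hint 0) (integrable_const 1) fun ω => hbdd _ ω
  calc ∫ ω, Z n ω ∂μ ≤ ∫ ω, Z (min (T m ω) n) ω ∂μ := hsup.integral_le_integral_min_const (hT m) n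
    _ ≤ ∫ ω, Z (T m ω) ω ∂μ + μ.real {ω | n ≤ T m ω} :=
        hsup.stronglyAdapted.integral_min_const_le_add_measureReal hnonneg hbdd (hT m) n
    _ ≤ (1 - ε) ^ m + (μ {ω | n ≤ T m ω}).toReal := by
        have := mul_le_of_le_one_right (pow_nonneg (sub_nonneg.2 hε.2.le) m) hstart
        rw [measureReal_def]
        linarith

/-- supermartingale bounded by 1 with geometrically contracting
values along an increasing sequence of stopping times. -/
theorem supermartingale_coupling_bound
    {Ω : Type*} {m0 : MeasurableSpace Ω} {μ : Measure Ω} [IsProbabilityMeasure μ]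
    (ℱ : Filtration ℕ m0) (Z : ℕ → Ω → ℝ) (T : ℕ → Ω → ℕ) (ε : ℝ)
    (hε : ε ∈ Set.Ioo (0 : ℝ) 1)
    (hsup : Supermartingale Z ℱ μ)
    (hnonneg : ∀ n ω, 0 ≤ Z n ω)
    (hbdd : ∀ n ω, Z n ω ≤ 1)
    (hT : ∀ m, IsStoppingTime ℱ (fun ω => (T m ω : WithTop ℕ)))
    (hTmono : ∀ m ω, T m ω ≤ T (m + 1) ω)
    (hcontr : ∀ m,
      μ[(fun ω => Z (T (m + 1) ω) ω) | (hT m).measurableSpace]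
        ≤ᵐ[μ] fun ω => (1 - ε) * Z (T m ω) ω) :
    ∀ n m : ℕ, ∫ ω, Z n ω ∂μ ≤ (1 - ε) ^ m + (μ {ω | n ≤ T m ω}).toReal :=
  supermartingale_coupling_bound_general ℱ Z T ε hε hsup hnonneg hbdd hT hcontr
end

section
/- Let r : ℝ≥0 → (0,∞) be a measurable, positive, nonincreasing-log-ratio subgeometric rate function (i.e., r ∈ Λ, meaning log r(t)/t decreases to 0), and define R(t) = 1 + ∫_0^t r(s) ds. Then the constant c₂ = sup_{m,n ∈ ℕ} R(m+n)/(R(m)·R(n)) is finite. -/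
open Set Filter MeasureTheory intervalIntegral

set_option maxHeartbeats 1000000 in
/-- for a subgeometric rate function `r ∈ Λ`, the cumulative
rate `R(t) = 1 + ∫_0^t r(s) ds` is submultiplicative over the integers up to
a finite constant `c₂`. -/
theorem cumulative_rate_submultiplicative
    (r : ℝ → ℝ) (hmeas : Measurable r) (hpos : ∀ t ≥ (0 : ℝ), 0 < r t)
    (hΛ : ∃ r₀ : ℝ → ℝ,
      (∀ t ≥ (0 : ℝ), 0 < r₀ t) ∧
      MonotoneOn r₀ (Set.Ici (0 : ℝ)) ∧
      AntitoneOn (fun t => Real.log (r₀ t) / t) (Set.Ioi (0 : ℝ)) ∧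
      Tendsto (fun t => Real.log (r₀ t) / t) atTop (nhds 0) ∧
      ∃ a b : ℝ, 0 < a ∧ ∀ t ≥ (0 : ℝ), a * r₀ t ≤ r t ∧ r t ≤ b * r₀ t)
    (hint : ∀ t ≥ (0 : ℝ), IntervalIntegrable r MeasureTheory.volume 0 t)
    (R : ℝ → ℝ) (hR : ∀ t, R t = 1 + ∫ s in (0 : ℝ)..t, r s) :
    ∃ C : ℝ, ∀ m n : ℕ, R (m + n) ≤ C * (R m * R n) := by
  obtain ⟨r₀, hr₀pos, hmono, hanti, htend, a, b, ha, hab⟩ := hΛ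
  have hb : 0 < b := by
    have h0 := hab 0 le_rfl
    have := hpos 0 le_rfl
    have := hr₀pos 0 le_rfl
    nlinarith
  -- f := log r₀ / t is nonnegative on (0,∞)
  have hfnn : ∀ t : ℝ, 0 < t → 0 ≤ Real.log (r₀ t) / t := by
    intro t ht
    refine le_of_tendsto htend ?_
    filter_upwards [eventually_ge_atTop t] with u hu
    exact hanti (mem_Ioi.2 ht) (mem_Ioi.2 (lt_of_lt_of_le ht hu)) hu
  -- submultiplicativity of r₀
  have hsub : ∀ s t : ℝ, 0 < s → 0 < t → r₀ (s + t) ≤ r₀ s * r₀ t := by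
    intro s t hs ht
    have hst : (0:ℝ) < s + t := by linarith
    have h1 : Real.log (r₀ (s + t)) / (s + t) ≤ Real.log (r₀ s) / s :=
      hanti (mem_Ioi.2 hs) (mem_Ioi.2 hst) (by linarith)
    have h2 : Real.log (r₀ (s + t)) / (s + t) ≤ Real.log (r₀ t) / t :=
      hanti (mem_Ioi.2 ht) (mem_Ioi.2 hst) (by linarith)
    have hlog : Real.log (r₀ (s + t)) ≤ Real.log (r₀ s) + Real.log (r₀ t) := by
      have e : Real.log (r₀ (s + t)) = s * (Real.log (r₀ (s+t)) / (s+t))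
          + t * (Real.log (r₀ (s+t)) / (s+t)) := by
        field_simp
      have b1 : s * (Real.log (r₀ (s+t)) / (s+t)) ≤ Real.log (r₀ s) := by
        have := mul_le_mul_of_nonneg_left h1 hs.le
        calc s * (Real.log (r₀ (s+t)) / (s+t)) ≤ s * (Real.log (r₀ s) / s) := this
          _ = Real.log (r₀ s) := by field_simp
      have b2 : t * (Real.log (r₀ (s+t)) / (s+t)) ≤ Real.log (r₀ t) := by
        have := mul_le_mul_of_nonneg_left h2 ht.le
        calc t * (Real.log (r₀ (s+t)) / (s+t)) ≤ t * (Real.log (r₀ t) / t) := this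
          _ = Real.log (r₀ t) := by field_simp
      linarith [e ▸ add_le_add b1 b2]
    have hp1 := hr₀pos s hs.le
    have hp2 := hr₀pos t ht.le
    have hp3 := hr₀pos (s + t) hst.le
    calc r₀ (s + t) = Real.exp (Real.log (r₀ (s + t))) := (Real.exp_log hp3).symm
      _ ≤ Real.exp (Real.log (r₀ s) + Real.log (r₀ t)) := Real.exp_le_exp.2 hlog
      _ = r₀ s * r₀ t := by rw [Real.exp_add, Real.exp_log hp1, Real.exp_log hp2]
  -- R t ≥ 1 for t ≥ 0
  have hRge1 : ∀ t : ℝ, 0 ≤ t → 1 ≤ R t := by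
    intro t ht
    rw [hR t]
    have : 0 ≤ ∫ s in (0:ℝ)..t, r s :=
      intervalIntegral.integral_nonneg ht (fun s hs => (hpos s hs.1).le)
    linarith
  -- integral up to t bounded by R t
  have hIntLeR : ∀ t : ℝ, (∫ s in (0:ℝ)..t, r s) ≤ R t := by
    intro t; rw [hR t]; linarith
  set C' := r₀ 1 * (1 + 1/a) with hC'
  have hr01 : 0 < r₀ 1 := hr₀pos 1 one_pos.le
  have hC'pos : 0 < C' := by positivity
  -- r₀ m ≤ C' * R m for m ≥ 1
  have hr₀R : ∀ m : ℕ, 1 ≤ m → r₀ (m : ℝ) ≤ C' * R m := by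
    intro m hm
    have hm1 : (1:ℝ) ≤ (m:ℝ) := by exact_mod_cast hm
    have hRm := hRge1 m (by linarith)
    rcases eq_or_lt_of_le hm1 with h1 | h1
    · -- m = 1
      rw [← h1]
      calc r₀ (1:ℝ) = r₀ 1 * 1 := (mul_one _).symm
        _ ≤ r₀ 1 * R 1 := by
            have := hRge1 1 one_pos.le
            rw [← h1] at hRm
            nlinarith
        _ ≤ C' * R 1 := by
            rw [← h1] at hRm
            have : r₀ 1 ≤ C' := by
              rw [hC']; nlinarith [one_div_pos.2 ha]
            nlinarith
    · -- m ≥ 2 : r₀ m ≤ r₀ (m-1) * r₀ 1 and a * r₀ (m-1) ≤ R m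
      have hm2 : (0:ℝ) < (m:ℝ) - 1 := by linarith
      have hsplit : r₀ (m:ℝ) ≤ r₀ ((m:ℝ) - 1) * r₀ 1 := by
        have := hsub ((m:ℝ) - 1) 1 hm2 one_pos
        simpa using this
      -- a * r₀ (m-1) ≤ ∫_{m-1}^m r
      have hInt1 : IntervalIntegrable r volume ((m:ℝ) - 1) (m:ℝ) :=
        (hint ((m:ℝ) - 1) hm2.le).symm.trans (hint (m:ℝ) (by linarith))
      have hconst : a * r₀ ((m:ℝ) - 1) ≤ ∫ s in ((m:ℝ) - 1)..(m:ℝ), r s := by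
        have hmono' : ∀ x ∈ Icc ((m:ℝ) - 1) (m:ℝ), a * r₀ ((m:ℝ) - 1) ≤ r x := by
          intro x hx
          have hx0 : (0:ℝ) ≤ x := by have := hx.1; linarith
          have h1 : r₀ ((m:ℝ) - 1) ≤ r₀ x := hmono (mem_Ici.2 hm2.le) (mem_Ici.2 hx0) hx.1
          have h2 := (hab x hx0).1
          nlinarith
        have := intervalIntegral.integral_mono_on (by linarith : (m:ℝ) - 1 ≤ (m:ℝ))
          (intervalIntegrable_const) hInt1 hmono'
        simpa using this
      have hadd : (∫ s in (0:ℝ)..((m:ℝ)-1), r s) + (∫ s in ((m:ℝ)-1)..(m:ℝ), r s)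
          = ∫ s in (0:ℝ)..(m:ℝ), r s :=
        intervalIntegral.integral_add_adjacent_intervals (hint _ hm2.le) hInt1
      have hnn : 0 ≤ ∫ s in (0:ℝ)..((m:ℝ)-1), r s :=
        intervalIntegral.integral_nonneg hm2.le (fun s hs => (hpos s hs.1).le)
      have hRm' : a * r₀ ((m:ℝ) - 1) ≤ R (m:ℝ) := by
        rw [hR]; linarith
      have hpm1 := hr₀pos ((m:ℝ) - 1) hm2.le
      calc r₀ (m:ℝ) ≤ r₀ ((m:ℝ) - 1) * r₀ 1 := hsplit
        _ ≤ (R (m:ℝ) / a) * r₀ 1 := by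
            have : r₀ ((m:ℝ) - 1) ≤ R (m:ℝ) / a := by
              rw [le_div_iff₀ ha]; linarith [hRm']
            nlinarith
        _ ≤ C' * R (m:ℝ) := by
            rw [hC']
            rw [div_mul_eq_mul_div, div_le_iff₀ ha]
            have hRpos : 0 < R (m:ℝ) := lt_of_lt_of_le one_pos hRm
            have e : r₀ 1 * (1 + 1/a) * R (m:ℝ) * a
                = r₀ 1 * R (m:ℝ) * a + r₀ 1 * R (m:ℝ) := by field_simp
            nlinarith [mul_pos (mul_pos hr01 hRpos) ha, mul_pos hr01 hRpos]
  refine ⟨1 + b * C' / a, ?_⟩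
  intro m n
  have hRm := hRge1 m (Nat.cast_nonneg m)
  have hRn := hRge1 n (Nat.cast_nonneg n)
  have hRmpos : (0:ℝ) < R m := lt_of_lt_of_le one_pos hRm
  have hRnpos : (0:ℝ) < R n := lt_of_lt_of_le one_pos hRn
  have hCpos : (0:ℝ) < b * C' / a := by positivity
  rcases Nat.eq_zero_or_pos n with hn0 | hn1
  · subst hn0
    simp only [Nat.cast_zero, add_zero]
    have hR0 : R 0 = 1 := by rw [hR]; simp
    rw [hR0]
    nlinarith
  rcases Nat.eq_zero_or_pos m with hm0 | hm1
  · subst hm0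
    simp only [Nat.cast_zero, zero_add]
    have hR0 : R 0 = 1 := by rw [hR]; simp
    rw [hR0]
    nlinarith
  -- main case m, n ≥ 1
  have hmpos : (0:ℝ) < (m:ℝ) := by exact_mod_cast hm1
  have hnpos : (0:ℝ) < (n:ℝ) := by exact_mod_cast hn1
  have hInt2 : IntervalIntegrable r volume (m:ℝ) ((m:ℝ) + (n:ℝ)) :=
    (hint (m:ℝ) hmpos.le).symm.trans (hint ((m:ℝ) + (n:ℝ)) (by linarith))
  have hsplitR : R ((m:ℝ) + (n:ℝ)) = R (m:ℝ) + ∫ s in (m:ℝ)..((m:ℝ)+(n:ℝ)), r s := by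
    rw [hR, hR]
    have := intervalIntegral.integral_add_adjacent_intervals (hint _ hmpos.le) hInt2
    push_cast
    linarith [this]
  -- change variables: ∫_m^{m+n} r = ∫_0^n r (m + u) du
  have hcv : (∫ s in (m:ℝ)..((m:ℝ)+(n:ℝ)), r s) = ∫ u in (0:ℝ)..(n:ℝ), r ((m:ℝ) + u) := by
    rw [intervalIntegral.integral_comp_add_left r (m:ℝ)]
    norm_num
  have hIntShift : IntervalIntegrable (fun u => r ((m:ℝ) + u)) volume 0 (n:ℝ) := by
    have := hInt2.comp_add_left (m:ℝ)
    simpa using this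
  -- pointwise a.e. bound: r (m + u) ≤ (b/a) * r₀ m * r u for a.e. u in [0, n]
  have hae : (fun u => r ((m:ℝ) + u)) ≤ᵐ[volume.restrict (Icc (0:ℝ) (n:ℝ))]
      fun u => (b / a * r₀ (m:ℝ)) * r u := by
    have h0 : ∀ᵐ u ∂(volume.restrict (Icc (0:ℝ) (n:ℝ))), u ≠ (0:ℝ) := by
      refine ae_mono Measure.restrict_le_self ?_
      have hvol : (volume : Measure ℝ) {u : ℝ | ¬ u ≠ 0} = 0 := by
        have : {u : ℝ | ¬ u ≠ 0} = {0} := by ext u; simp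
        rw [this]; exact Real.volume_singleton
      exact hvol
    have hmem : ∀ᵐ u ∂(volume.restrict (Icc (0:ℝ) (n:ℝ))), u ∈ Icc (0:ℝ) (n:ℝ) :=
      ae_restrict_mem measurableSet_Icc
    filter_upwards [h0, hmem] with u hu hmem'
    have hu0 : 0 < u := lt_of_le_of_ne hmem'.1 (Ne.symm hu)
    have h1 : r ((m:ℝ) + u) ≤ b * r₀ ((m:ℝ) + u) := (hab _ (by linarith)).2
    have h2 : r₀ ((m:ℝ) + u) ≤ r₀ (m:ℝ) * r₀ u := hsub _ _ hmpos hu0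
    have h3 : a * r₀ u ≤ r u := (hab u hu0.le).1
    have hp1 := hr₀pos (m:ℝ) hmpos.le
    have hp2 := hr₀pos u hu0.le
    have hp3 := hr₀pos ((m:ℝ) + u) (by linarith : (0:ℝ) ≤ (m:ℝ) + u)
    have hc : (0:ℝ) ≤ b / a * r₀ (m:ℝ) := by positivity
    have h4 := mul_le_mul_of_nonneg_left h3 hc
    have e : (b / a * r₀ (m:ℝ)) * (a * r₀ u) = b * (r₀ (m:ℝ) * r₀ u) := by
      field_simp
    calc r ((m:ℝ) + u) ≤ b * r₀ ((m:ℝ) + u) := h1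
      _ ≤ b * (r₀ (m:ℝ) * r₀ u) := by nlinarith
      _ = (b / a * r₀ (m:ℝ)) * (a * r₀ u) := e.symm
      _ ≤ (b / a * r₀ (m:ℝ)) * r u := h4
  have hbound : (∫ u in (0:ℝ)..(n:ℝ), r ((m:ℝ) + u))
      ≤ ∫ u in (0:ℝ)..(n:ℝ), (b / a * r₀ (m:ℝ)) * r u :=
    intervalIntegral.integral_mono_ae_restrict hnpos.le hIntShift
      ((hint (n:ℝ) hnpos.le).const_mul _) hae
  have hfinal : (∫ u in (0:ℝ)..(n:ℝ), (b / a * r₀ (m:ℝ)) * r u)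
      ≤ (b / a * r₀ (m:ℝ)) * R (n:ℝ) := by
    rw [intervalIntegral.integral_const_mul]
    have hpm := hr₀pos (m:ℝ) hmpos.le
    have hc : 0 ≤ b / a * r₀ (m:ℝ) := by positivity
    exact mul_le_mul_of_nonneg_left (hIntLeR (n:ℝ)) hc
  have hr0m := hr₀R m hm1
  have hpm := hr₀pos (m:ℝ) hmpos.le
  have key : R ((m:ℝ) + (n:ℝ)) ≤ R (m:ℝ) + (b / a * (C' * R (m:ℝ))) * R (n:ℝ) := by
    rw [hsplitR, hcv]
    have h5 : (b / a * r₀ (m:ℝ)) * R (n:ℝ) ≤ (b / a * (C' * R (m:ℝ))) * R (n:ℝ) := by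
      have hba : 0 ≤ b / a := by positivity
      have := mul_le_mul_of_nonneg_left hr0m hba
      exact mul_le_mul_of_nonneg_right this hRnpos.le
    linarith [le_trans hbound hfinal]
  push_cast at key ⊢
  have hle : R (m:ℝ) ≤ R (m:ℝ) * R (n:ℝ) := by nlinarith
  have e2 : R (m:ℝ) + (b / a * (C' * R (m:ℝ))) * R (n:ℝ)
      = R (m:ℝ) + (b * C' / a) * (R (m:ℝ) * R (n:ℝ)) := by ring
  nlinarith [key, hle, mul_pos hRmpos hRnpos]
end

section
/- Let r ∈ Λ₀ (positive, nondecreasing, with log r(t)/t nonincreasing to 0) and R(t) = 1 + ∫_0^t r(s) ds. Then for every κ > 0 there exists M_κ ≥ 0 such that r(t) ≤ κ·R(t) for all t ≥ M_κ. -/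
open Set Filter MeasureTheory intervalIntegral

/-- for `r ∈ Λ₀`, eventually `r(t) ≤ κ R(t)` where
`R(t) = 1 + ∫_0^t r(s) ds`. -/
theorem rate_le_kappa_cumulative
    (r : ℝ → ℝ) (hpos : ∀ t ≥ (0 : ℝ), 0 < r t)
    (hmono : MonotoneOn r (Set.Ici (0 : ℝ)))
    (hlog : AntitoneOn (fun t => Real.log (r t) / t) (Set.Ioi (0 : ℝ)))
    (hlim : Tendsto (fun t => Real.log (r t) / t) atTop (nhds 0))
    (R : ℝ → ℝ) (hR : ∀ t, R t = 1 + ∫ s in (0 : ℝ)..t, r s) :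
    ∀ κ > (0 : ℝ), ∃ M ≥ (0 : ℝ), ∀ t ≥ M, r t ≤ κ * R t := by
  intro κ hκ
  set L : ℝ := 2 / κ with hLdef
  have hLpos : 0 < L := by positivity
  have hεpos : 0 < Real.log 2 / L := by
    have h2 : (0:ℝ) < Real.log 2 := Real.log_pos (by norm_num)
    positivity
  obtain ⟨M₀, hM₀⟩ := eventually_atTop.mp (hlim.eventually_lt_const hεpos)
  refine ⟨max M₀ 1 + L, by positivity, ?_⟩
  intro t ht
  set s : ℝ := t - L with hsdef
  have hsM₀ : M₀ ≤ s := by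
    have := le_max_left M₀ 1
    simp only [hsdef]; linarith
  have hs1 : (1:ℝ) ≤ s := by
    have := le_max_right M₀ 1
    simp only [hsdef]; linarith
  have hs0 : 0 < s := lt_of_lt_of_le one_pos hs1
  have hst : s ≤ t := by simp [hsdef]; linarith
  have ht0 : 0 < t := lt_of_lt_of_le hs0 hst
  have hrs : 0 < r s := hpos s hs0.le
  have hrt : 0 < r t := hpos t ht0.le
  -- key: r t ≤ 2 * r s
  have hlog_st : Real.log (r t) / t ≤ Real.log (r s) / s :=
    hlog (mem_Ioi.mpr hs0) (mem_Ioi.mpr ht0) hst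
  have h1 : Real.log (r t) ≤ Real.log (r s) + L * (Real.log (r s) / s) := by
    have h2 : Real.log (r t) ≤ t * (Real.log (r s) / s) := by
      have := (div_le_iff₀ ht0).mp hlog_st
      linarith
    have h3 : t * (Real.log (r s) / s) =
        s * (Real.log (r s) / s) + L * (Real.log (r s) / s) := by
      have : t = s + L := by simp [hsdef]
      rw [this]; ring
    have h4 : s * (Real.log (r s) / s) = Real.log (r s) := by
      field_simp
    linarith [h2, h3 ▸ h2]
  have key : r t ≤ 2 * r s := by
    have hlog2rs : Real.log (2 * r s) = Real.log 2 + Real.log (r s) :=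
      Real.log_mul (by norm_num) hrs.ne'
    have hfinal : Real.log (r t) ≤ Real.log (2 * r s) := by
      rcases le_or_gt 0 (Real.log (r s)) with h | h
      · have h5 : Real.log (r s) / s < Real.log 2 / L := hM₀ s hsM₀
        have h6 : L * (Real.log (r s) / s) ≤ L * (Real.log 2 / L) :=
          mul_le_mul_of_nonneg_left h5.le hLpos.le
        have h7 : L * (Real.log 2 / L) = Real.log 2 := by field_simp
        rw [hlog2rs]; linarith
      · have h6 : L * (Real.log (r s) / s) ≤ 0 := by
          apply mul_nonpos_of_nonneg_of_nonpos hLpos.le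
          exact div_nonpos_of_nonpos_of_nonneg h.le hs0.le
        have h7 : (0:ℝ) ≤ Real.log 2 := Real.log_nonneg (by norm_num)
        rw [hlog2rs]; linarith
    exact (Real.log_le_log_iff hrt (by positivity)).mp hfinal
  -- integral bound
  have hint1 : IntervalIntegrable r volume 0 s := by
    apply MonotoneOn.intervalIntegrable
    apply hmono.mono
    rw [uIcc_of_le hs0.le]
    exact fun x hx => hx.1
  have hint2 : IntervalIntegrable r volume s t := by
    apply MonotoneOn.intervalIntegrable
    apply hmono.mono
    rw [uIcc_of_le hst]
    exact fun x hx => le_trans hs0.le hx.1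
  have hsplit : (∫ x in (0:ℝ)..t, r x) =
      (∫ x in (0:ℝ)..s, r x) + ∫ x in s..t, r x :=
    (intervalIntegral.integral_add_adjacent_intervals hint1 hint2).symm
  have hI1 : 0 ≤ ∫ x in (0:ℝ)..s, r x := by
    apply intervalIntegral.integral_nonneg hs0.le
    intro x hx
    exact (hpos x hx.1).le
  have hI2 : L * r s ≤ ∫ x in s..t, r x := by
    have hc : (∫ x in s..t, (fun _ => r s) x) = (t - s) * r s := by
      simp [intervalIntegral.integral_const, smul_eq_mul]
    have hmono2 : (∫ x in s..t, (fun _ => r s) x) ≤ ∫ x in s..t, r x := by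
      apply intervalIntegral.integral_mono_on hst (intervalIntegrable_const) hint2
      intro x hx
      exact hmono (mem_Ici.mpr hs0.le) (mem_Ici.mpr (le_trans hs0.le hx.1)) hx.1
    have hts : t - s = L := by simp [hsdef]
    rw [hc, hts] at hmono2
    exact hmono2
  have hRt : κ * R t ≥ 2 * r s := by
    rw [hR t, hsplit]
    have hκL : κ * L = 2 := by
      rw [hLdef]; field_simp
    have : κ * (1 + ((∫ x in (0:ℝ)..s, r x) + ∫ x in s..t, r x)) ≥
        κ * (L * r s) := by
      apply mul_le_mul_of_nonneg_left _ hκ.le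
      nlinarith
    calc κ * (1 + ((∫ x in (0:ℝ)..s, r x) + ∫ x in s..t, r x))
        ≥ κ * (L * r s) := this
      _ = (κ * L) * r s := by ring
      _ = 2 * r s := by rw [hκL]
  linarith
end

section
/- Let φ ∈ 𝔽 and define, for k ≥ 0, H_k(u) = H_φ^{-1}(H_φ(u) + k) − H_φ^{-1}(k) for u ≥ 1. Then each H_k is concave on [1,∞), and H_0(u) ≤ u for all u ≥ 1. -/
/-!
Let `G` invert `H(u) = ∫_1^u ds/φ(s)` and put `v(u) = G(H(u) + c)` with `c ≥ 0`.
Since `G' = φ ∘ G`, `v' = φ(v)/φ`, and the quotient rule gives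
`v'' = φ(v) (φ'(v) - φ') / φ²`. As `H` increases, `v(u) ≥ u`, so `φ'(v) ≤ φ'`
because `φ'` is antitone by concavity; hence `v'' ≤ 0`.
-/

open Set Filter Topology intervalIntegral

theorem ConcaveOn.antitoneOn_of_hasDerivWithinAt {S : Set ℝ} {f f' : ℝ → ℝ}
    (hf : ConcaveOn ℝ S f) (hf' : ∀ x ∈ S, HasDerivWithinAt f (f' x) S x) :
    AntitoneOn f' S := by
  intro x hx y hy hxy
  rcases hxy.eq_or_lt with rfl | hlt
  · rfl
  · exact (hf.le_slope_of_hasDerivWithinAt hx hy hlt (hf' y hy)).trans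
      (hf.slope_le_of_hasDerivWithinAt hx hy hlt (hf' x hx))

theorem concaveOn_Ici_of_hasDerivAt_eq_div {φ φd v : ℝ → ℝ} {a : ℝ}
    (hconc : ConcaveOn ℝ (Ici a) φ) (hpos : ∀ u ≥ a, 0 < φ u)
    (hderiv : ∀ u ∈ Ici a, HasDerivWithinAt φ (φd u) (Ici a) u)
    (hv : ContinuousOn v (Ici a)) (hv' : ∀ u > a, HasDerivAt v (φ (v u) / φ u) u)
    (hle : ∀ u ≥ a, u ≤ v u) :
    ConcaveOn ℝ (Ici a) v := by
  have hφd : AntitoneOn φd (Ici a) := hconc.antitoneOn_of_hasDerivWithinAt hderiv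
  have hφ' : ∀ u > a, HasDerivAt φ (φd u) u := fun u hu =>
    (hderiv u hu.le).hasDerivAt (Ici_mem_nhds hu)
  refine concaveOn_of_hasDerivWithinAt2_nonpos (convex_Ici a) hv (f' := fun u => φ (v u) / φ u)
    (f'' := fun u => (φd (v u) * (φ (v u) / φ u) * φ u - φ (v u) * φd u) / φ u ^ 2)
    ?_ ?_ ?_ <;> rw [interior_Ici]
  · exact fun u hu => (hv' u hu).hasDerivWithinAt
  · intro u hu
    have hvu : a < v u := lt_of_lt_of_le hu (hle u hu.le)
    exact (((hφ' _ hvu).comp u (hv' u hu)).div (hφ' u hu) (hpos u hu.le).ne').hasDerivWithinAt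
  · intro u hu
    have hφu : φ u ≠ 0 := (hpos u hu.le).ne'
    have hφv := hpos (v u) (hu.le.trans (hle u hu.le))
    have hφd_le : φd (v u) ≤ φd u :=
      hφd (mem_Ici.2 hu.le) (mem_Ici.2 (hu.le.trans (hle u hu.le))) (hle u hu.le)
    have hnum : φd (v u) * (φ (v u) / φ u) * φ u - φ (v u) * φd u
        = φ (v u) * (φd (v u) - φd u) := by
      field_simp
    simp only [hnum]
    exact div_nonpos_of_nonpos_of_nonneg
      (mul_nonpos_of_nonneg_of_nonpos hφv.le (by linarith)) (by positivity)

theorem hasDerivWithinAt_integral_Ici {f : ℝ → ℝ} {a u : ℝ} (hf : ContinuousOn f (Ici a))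
    (hu : a ≤ u) :
    HasDerivWithinAt (fun x => ∫ s in a..x, f s) (f u) (Ici a) u := by
  have hint : IntervalIntegrable f MeasureTheory.volume a u :=
    (hf.mono (ordConnected_Ici.uIcc_subset self_mem_Ici hu)).intervalIntegrable
  have hf_Ioi : ContinuousOn f (Ioi a) := hf.mono Ioi_subset_Ici_self
  rcases hu.eq_or_lt with rfl | hlt
  · exact integral_hasDerivWithinAt_right hint
      (hf_Ioi.stronglyMeasurableAtFilter_nhdsWithin measurableSet_Ioi a)
      ((hf a self_mem_Ici).mono Ioi_subset_Ici_self)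
  · exact (integral_hasDerivAt_right hint (hf_Ioi.stronglyMeasurableAtFilter isOpen_Ioi u hlt)
      ((hf u hu).continuousAt (Ici_mem_nhds hlt))).hasDerivWithinAt

section Inverse

variable {H G : ℝ → ℝ} {a b : ℝ}

theorem lt_inverse_of_lt (hHa : H a = b) (hHG : ∀ t ≥ b, H (G t) = t ∧ a ≤ G t) {t : ℝ}
    (ht : b < t) : a < G t := by
  refine lt_of_le_of_ne (hHG t ht.le).2 fun h => ht.ne ?_
  rw [← (hHG t ht.le).1, ← h, hHa]

theorem monotoneOn_inverse (hH : MonotoneOn H (Ici a))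
    (hHG : ∀ t ≥ b, H (G t) = t ∧ a ≤ G t) : MonotoneOn G (Ici b) :=
  Function.monotoneOn_of_rightInvOn_of_mapsTo hH (fun t ht => (hHG t ht).1)
    (fun t ht => (hHG t ht).2)

theorem continuousOn_inverse (hH : StrictMonoOn H (Ici a)) (hHa : H a = b)
    (hGH : ∀ u ≥ a, G (H u) = u) (hHG : ∀ t ≥ b, H (G t) = t ∧ a ≤ G t) :
    ContinuousOn G (Ici b) := by
  have hG := monotoneOn_inverse hH.monotoneOn hHG
  have himage : Ici a ⊆ G '' Ici b := fun u hu =>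
    ⟨H u, hHa ▸ hH.monotoneOn self_mem_Ici hu hu, hGH u hu⟩
  have hGb : G b = a := by rw [← hHa, hGH a le_rfl]
  intro t ht
  rcases (mem_Ici.1 ht).eq_or_lt with rfl | hlt
  · exact continuousWithinAt_right_of_monotoneOn_of_image_mem_nhdsWithin hG self_mem_nhdsWithin
      (mem_of_superset (hGb ▸ self_mem_nhdsWithin) himage)
  · exact (continuousAt_of_monotoneOn_of_image_mem_nhds hG (Ici_mem_nhds hlt)
      (mem_of_superset (Ici_mem_nhds (lt_inverse_of_lt hHa hHG hlt)) himage)).continuousWithinAt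

theorem hasDerivAt_inverse {φ : ℝ → ℝ} (hHd : ∀ u > a, HasDerivAt H (1 / φ u) u)
    (hφ : ∀ u > a, φ u ≠ 0) (hGc : ContinuousOn G (Ici b)) (hHa : H a = b)
    (hHG : ∀ t ≥ b, H (G t) = t ∧ a ≤ G t) {t : ℝ} (ht : b < t) :
    HasDerivAt G (φ (G t)) t := by
  have hGt := lt_inverse_of_lt hHa hHG ht
  have hHG_near : ∀ᶠ y in 𝓝 t, H (G y) = y := by
    filter_upwards [Ici_mem_nhds ht] with y hy using (hHG y hy).1
  simpa using (hHd _ hGt).of_local_left_inverse ((hGc t ht.le).continuousAt (Ici_mem_nhds ht))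
    (one_div_ne_zero (hφ _ hGt)) hHG_near

end Inverse

theorem concaveOn_inverse_comp_add_const {φ φd H G : ℝ → ℝ} {a : ℝ}
    (hconc : ConcaveOn ℝ (Ici a) φ) (hpos : ∀ u ≥ a, 0 < φ u)
    (hderiv : ∀ u ∈ Ici a, HasDerivWithinAt φ (φd u) (Ici a) u)
    (hHd : ∀ u ∈ Ici a, HasDerivWithinAt H (1 / φ u) (Ici a) u) (hHa : H a = 0)
    (hGH : ∀ u ≥ a, G (H u) = u) (hHG : ∀ t ≥ 0, H (G t) = t ∧ a ≤ G t)
    {c : ℝ} (hc : 0 ≤ c) :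
    ConcaveOn ℝ (Ici a) (fun u => G (H u + c)) := by
  have hHc : ContinuousOn H (Ici a) := fun u hu => (hHd u hu).continuousWithinAt
  have hHd' : ∀ u > a, HasDerivAt H (1 / φ u) u := fun u hu =>
    (hHd u hu.le).hasDerivAt (Ici_mem_nhds hu)
  have hH : StrictMonoOn H (Ici a) := by
    refine strictMonoOn_of_hasDerivWithinAt_pos (convex_Ici a) hHc (f' := fun u => 1 / φ u)
      ?_ ?_ <;> rw [interior_Ici]
    · exact fun u hu => (hHd' u hu).hasDerivWithinAt
    · exact fun u hu => one_div_pos.2 (hpos u hu.le)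
  have hGc := continuousOn_inverse hH hHa hGH hHG
  have hH_nonneg : ∀ u ≥ a, 0 ≤ H u := fun u hu => hHa ▸ hH.monotoneOn self_mem_Ici hu hu
  refine concaveOn_Ici_of_hasDerivAt_eq_div hconc hpos hderiv
    (hGc.comp (hHc.add continuousOn_const) fun u hu => add_nonneg (hH_nonneg u hu) hc)
    (fun u hu => ?_) (fun u hu => ?_)
  · have hHu : 0 < H u + c := add_pos_of_pos_of_nonneg (hHa ▸ hH self_mem_Ici hu.le hu) hc
    rw [div_eq_mul_one_div]
    exact (hasDerivAt_inverse hHd' (fun u hu => (hpos u hu.le).ne') hGc hHa hHG hHu).comp u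
      ((hHd' u hu).add_const c)
  · calc u = G (H u) := (hGH u hu).symm
      _ ≤ G (H u + c) := monotoneOn_inverse hH.monotoneOn hHG (hH_nonneg u hu)
          (add_nonneg (hH_nonneg u hu) hc) (le_add_of_nonneg_right hc)

theorem Hk_concave_and_H0_le_general
    (φ φd : ℝ → ℝ)
    (hconc : ConcaveOn ℝ (Set.Ici (1 : ℝ)) φ)
    (hpos : ∀ u ≥ (1 : ℝ), 0 < φ u)
    (hderiv : ∀ u ∈ Set.Ici (1 : ℝ), HasDerivWithinAt φ (φd u) (Set.Ici 1) u)
    (H : ℝ → ℝ) (hH : ∀ u, H u = ∫ s in (1 : ℝ)..u, 1 / φ s)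
    (G : ℝ → ℝ)
    (hG1 : ∀ u ≥ (1 : ℝ), G (H u) = u)
    (hG2 : ∀ t ≥ (0 : ℝ), H (G t) = t ∧ 1 ≤ G t) :
    ∀ k : ℕ,
      ConcaveOn ℝ (Set.Ici (1 : ℝ)) (fun u => G (H u + k) - G k) ∧
      ∀ u ≥ (1 : ℝ), G (H u + (0 : ℕ)) - G (0 : ℕ) ≤ u := by
  have hf : ContinuousOn (fun s => 1 / φ s) (Ici 1) := continuousOn_const.div
    (fun u hu => (hderiv u hu).continuousWithinAt) (fun u hu => (hpos u hu).ne')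
  have hHd : ∀ u ∈ Ici (1 : ℝ), HasDerivWithinAt H (1 / φ u) (Ici 1) u := fun u hu =>
    funext hH ▸ hasDerivWithinAt_integral_Ici hf hu
  have hH1 : H 1 = 0 := by rw [hH, integral_same]
  have hG0 : G 0 = 1 := by simpa [hH1] using hG1 1 le_rfl
  intro k
  refine ⟨?_, fun u hu => by simp [hG1 u hu, hG0]⟩
  exact (concaveOn_inverse_comp_add_const hconc hpos hderiv hHd hH1 hG1 hG2
    k.cast_nonneg).sub (convexOn_const _ (convex_Ici 1))

/-- for `φ ∈ 𝔽` with `H_φ(u) = ∫_1^u ds/φ(s)` and inverse `G`,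
each `H_k(u) = G(H_φ(u) + k) − G(k)` is concave on `[1,∞)`, and
`H_0(u) ≤ u` for all `u ≥ 1`. -/
theorem Hk_concave_and_H0_le
    (φ φd : ℝ → ℝ)
    (hconc : ConcaveOn ℝ (Set.Ici (1 : ℝ)) φ)
    (hmono : StrictMonoOn φ (Set.Ici (1 : ℝ)))
    (hpos : ∀ u ≥ (1 : ℝ), 0 < φ u)
    (hderiv : ∀ u ∈ Set.Ici (1 : ℝ), HasDerivWithinAt φ (φd u) (Set.Ici 1) u)
    (hcont : ContinuousOn φd (Set.Ici (1 : ℝ)))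
    (H : ℝ → ℝ) (hH : ∀ u, H u = ∫ s in (1 : ℝ)..u, 1 / φ s)
    (G : ℝ → ℝ)
    (hG1 : ∀ u ≥ (1 : ℝ), G (H u) = u)
    (hG2 : ∀ t ≥ (0 : ℝ), H (G t) = t ∧ 1 ≤ G t) :
    ∀ k : ℕ,
      ConcaveOn ℝ (Set.Ici (1 : ℝ)) (fun u => G (H u + k) - G k) ∧
      ∀ u ≥ (1 : ℝ), G (H u + (0 : ℕ)) - G (0 : ℕ) ≤ u :=
  Hk_concave_and_H0_le_general φ φd hconc hpos hderiv H hH G hG1 hG2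
end

section
/- Let φ ∈ 𝔽, H_k(u) = H_φ^{-1}(H_φ(u) + k) − H_φ^{-1}(k), and r_φ(k) = φ(H_φ^{-1}(k)). Then for every u ≥ 1 and every k ≥ 0: H_{k+1}(u) − φ(u)·H'_{k+1}(u) ≤ H_k(u) − r_φ(k). -/
open Set Filter MeasureTheory intervalIntegral

/-- for `φ ∈ 𝔽`, with `H_k(u) = G(H_φ(u)+k) − G(k)`,
`r_φ(t) = φ(G(t))` and `H'_{k+1}(u) = r_φ(H_φ(u)+k+1)/φ(u)`, one has
`H_{k+1}(u) − φ(u)·H'_{k+1}(u) ≤ H_k(u) − r_φ(k)` for all `u ≥ 1`, `k ≥ 0`. -/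
theorem Hk_key_drift_inequality
    (φ φd : ℝ → ℝ)
    (hconc : ConcaveOn ℝ (Set.Ici (1 : ℝ)) φ)
    (hmono : StrictMonoOn φ (Set.Ici (1 : ℝ)))
    (hpos : ∀ u ≥ (1 : ℝ), 0 < φ u)
    (hderiv : ∀ u ∈ Set.Ici (1 : ℝ), HasDerivWithinAt φ (φd u) (Set.Ici 1) u)
    (hcont : ContinuousOn φd (Set.Ici (1 : ℝ)))
    (H : ℝ → ℝ) (hH : ∀ u, H u = ∫ s in (1 : ℝ)..u, 1 / φ s)
    (G : ℝ → ℝ)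
    (hG1 : ∀ u ≥ (1 : ℝ), G (H u) = u)
    (hG2 : ∀ t ≥ (0 : ℝ), H (G t) = t ∧ 1 ≤ G t)
    (rφ : ℝ → ℝ) (hrφ : ∀ t, rφ t = φ (G t)) :
    ∀ k : ℕ, ∀ u ≥ (1 : ℝ),
      (G (H u + (k + 1 : ℕ)) - G (k + 1 : ℕ))
          - φ u * (rφ (H u + (k + 1 : ℕ)) / φ u)
        ≤ (G (H u + k) - G k) - rφ k := by
  have hφcont : ContinuousOn φ (Set.Ici 1) := fun u hu => (hderiv u hu).continuousWithinAt
  -- integrability of 1/φ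
  have hint : ∀ a b : ℝ, 1 ≤ a → a ≤ b →
      IntervalIntegrable (fun s => 1 / φ s) MeasureTheory.volume a b := by
    intro a b ha hab
    apply ContinuousOn.intervalIntegrable
    apply ContinuousOn.div continuousOn_const (hφcont.mono ?_) ?_
    · intro x hx; rw [Set.uIcc_of_le hab] at hx; exact le_trans ha hx.1
    · intro x hx; rw [Set.uIcc_of_le hab] at hx
      exact (hpos x (le_trans ha hx.1)).ne'
  have hHdiff : ∀ a b : ℝ, 1 ≤ a → a ≤ b → H b - H a = ∫ s in a..b, 1 / φ s := by
    intro a b ha hab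
    rw [hH, hH, ← intervalIntegral.integral_interval_sub_left
      (hint 1 b le_rfl (le_trans ha hab)) (hint 1 a le_rfl ha)]
  -- H is monotone on [1,∞)
  have hHmono : ∀ a b : ℝ, 1 ≤ a → a ≤ b → H a ≤ H b := by
    intro a b ha hab
    have h := hHdiff a b ha hab
    have hnn : 0 ≤ ∫ s in a..b, 1 / φ s := by
      apply intervalIntegral.integral_nonneg hab
      intro x hx
      exact le_of_lt (one_div_pos.mpr (hpos x (le_trans ha hx.1)))
    linarith
  -- G is monotone on nonneg reals
  have hGmono : ∀ s t : ℝ, 0 ≤ s → s < t → G s ≤ G t := by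
    intro s t hs hst
    by_contra h
    push_neg at h
    have h1 := (hG2 s hs).2
    have h2 := (hG2 t (le_of_lt (lt_of_le_of_lt hs hst))).2
    have := hHmono (G t) (G s) h2 (le_of_lt h)
    rw [(hG2 s hs).1, (hG2 t (le_of_lt (lt_of_le_of_lt hs hst))).1] at this
    linarith
  -- key: φ(G t) ≤ G(t+1) - G t ≤ φ(G(t+1))
  have key : ∀ t : ℝ, 0 ≤ t →
      φ (G t) ≤ G (t + 1) - G t ∧ G (t + 1) - G t ≤ φ (G (t + 1)) := by
    intro t ht
    set a := G t with hadef
    set b := G (t + 1) with hbdef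
    have ht1 : (0 : ℝ) ≤ t + 1 := by linarith
    have ha1 : 1 ≤ a := (hG2 t ht).2
    have hb1 : 1 ≤ b := (hG2 (t + 1) ht1).2
    have hab : a ≤ b := hGmono t (t + 1) ht (by linarith)
    have hone : (∫ s in a..b, 1 / φ s) = 1 := by
      rw [← hHdiff a b ha1 hab, (hG2 t ht).1, (hG2 (t + 1) ht1).1]; ring
    have hmem : ∀ x ∈ Set.Icc a b, 1 ≤ x := fun x hx => le_trans ha1 hx.1
    -- upper bound: 1/φ s ≤ 1/φ a
    have hub : (∫ s in a..b, 1 / φ s) ≤ (b - a) * (1 / φ a) := by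
      have := intervalIntegral.integral_mono_on hab (hint a b ha1 hab)
        (_root_.intervalIntegrable_const (c := 1 / φ a)) (fun x hx => by
          apply one_div_le_one_div_of_le (hpos a ha1)
          rcases eq_or_lt_of_le hx.1 with h | h
          · rw [← h]
          · exact le_of_lt (hmono (Set.mem_Ici.mpr ha1) (Set.mem_Ici.mpr (hmem x hx)) h))
      simpa [smul_eq_mul] using this
    -- lower bound: 1/φ b ≤ 1/φ s
    have hlb : (b - a) * (1 / φ b) ≤ ∫ s in a..b, 1 / φ s := by
      have := intervalIntegral.integral_mono_on hab
        (_root_.intervalIntegrable_const (c := 1 / φ b)) (hint a b ha1 hab) (fun x hx => by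
          apply one_div_le_one_div_of_le (hpos x (hmem x hx))
          rcases eq_or_lt_of_le hx.2 with h | h
          · rw [h]
          · exact le_of_lt (hmono (Set.mem_Ici.mpr (hmem x hx)) (Set.mem_Ici.mpr hb1) h))
      simpa [smul_eq_mul] using this
    have hpa := hpos a ha1
    have hpb := hpos b hb1
    constructor
    · rw [hone] at hub
      have : 1 ≤ (b - a) / φ a := by rw [div_eq_mul_one_div]; exact hub
      rw [le_div_iff₀ hpa] at this; linarith
    · rw [hone] at hlb
      have : (b - a) / φ b ≤ 1 := by rw [div_eq_mul_one_div]; exact hlb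
      rw [div_le_one hpb] at this; linarith
  intro k u hu
  have hHu : 0 ≤ H u := by
    have h := hHmono 1 u le_rfl hu
    have h1 : H 1 = 0 := by rw [hH]; simp
    linarith
  have hk0 : (0 : ℝ) ≤ (k : ℝ) := Nat.cast_nonneg k
  have hcast : ((k + 1 : ℕ) : ℝ) = (k : ℝ) + 1 := by push_cast; ring
  have h1 := key ((k : ℝ)) hk0
  have h2 := key (H u + k) (by linarith)
  have hdiv : φ u * (rφ (H u + ((k + 1 : ℕ) : ℝ)) / φ u) = rφ (H u + ((k + 1 : ℕ) : ℝ)) := by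
    field_simp [(hpos u hu).ne']
  rw [hdiv, hrφ, hrφ, hcast]
  have heq : H u + ((k : ℝ) + 1) = (H u + k) + 1 := by ring
  rw [heq]
  linarith [h1.1, h2.2]
end

section
/- Let φ ∈ 𝔽 and H'_{k}(u) = r_φ(H_φ(u)+k)/φ(u). Then H'_{k+1}(1) = r_φ(k+1)/r_φ(0), and H'_{k+1}(u) ≤ H'_{k+1}(1) for all u ≥ 1. -/
open Set Filter MeasureTheory intervalIntegral

/-- with `H'_{k+1}(u) = r_φ(H_φ(u)+k+1)/φ(u)` and
`r_φ(t) = φ(G(t))`, one has `H'_{k+1}(1) = r_φ(k+1)/r_φ(0)` and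
`H'_{k+1}(u) ≤ H'_{k+1}(1)` for all `u ≥ 1`. -/
theorem Hk_deriv_at_one
    (φ φd : ℝ → ℝ)
    (hconc : ConcaveOn ℝ (Set.Ici (1 : ℝ)) φ)
    (hmono : StrictMonoOn φ (Set.Ici (1 : ℝ)))
    (hpos : ∀ u ≥ (1 : ℝ), 0 < φ u)
    (hderiv : ∀ u ∈ Set.Ici (1 : ℝ), HasDerivWithinAt φ (φd u) (Set.Ici 1) u)
    (hcont : ContinuousOn φd (Set.Ici (1 : ℝ)))
    (H : ℝ → ℝ) (hH : ∀ u, H u = ∫ s in (1 : ℝ)..u, 1 / φ s)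
    (G : ℝ → ℝ)
    (hG1 : ∀ u ≥ (1 : ℝ), G (H u) = u)
    (hG2 : ∀ t ≥ (0 : ℝ), H (G t) = t ∧ 1 ≤ G t)
    (rφ : ℝ → ℝ) (hrφ : ∀ t, rφ t = φ (G t)) :
    ∀ k : ℕ,
      rφ (H 1 + (k + 1 : ℕ)) / φ 1 = rφ (k + 1 : ℕ) / rφ 0 ∧
      ∀ u ≥ (1 : ℝ),
        rφ (H u + (k + 1 : ℕ)) / φ u ≤ rφ (H 1 + (k + 1 : ℕ)) / φ 1 := by
  have hφcont : ContinuousOn φ (Set.Ici 1) := fun u hu => (hderiv u hu).continuousWithinAt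
  -- antitone derivative
  have hanti : ∀ x ∈ Set.Ici (1:ℝ), ∀ y ∈ Set.Ici (1:ℝ), x ≤ y → φd y ≤ φd x := by
    intro x hx y hy hxy
    rcases eq_or_lt_of_le hxy with rfl | hlt
    · exact le_rfl
    · exact (hconc.le_slope_of_hasDerivWithinAt hx hy hlt (hderiv y hy)).trans
        (hconc.slope_le_of_hasDerivWithinAt hx hy hlt (hderiv x hx))
  -- integrability
  have hsub : ∀ a b : ℝ, 1 ≤ a → 1 ≤ b → Set.uIcc a b ⊆ Set.Ici 1 := by
    intro a b ha hb x hx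
    exact le_trans (le_min ha hb) hx.1
  have hint1 : ∀ a b : ℝ, 1 ≤ a → 1 ≤ b →
      IntervalIntegrable (fun s => 1 / φ s) volume a b := by
    intro a b ha hb
    exact (continuousOn_const.div (hφcont.mono (hsub a b ha hb))
      (fun x hx => (hpos x (hsub a b ha hb hx)).ne')).intervalIntegrable
  have hintc : ∀ (c : ℝ) (a b : ℝ), 1 ≤ a → 1 ≤ b →
      IntervalIntegrable (fun s => c / φ s) volume a b := by
    intro c a b ha hb
    exact (continuousOn_const.div (hφcont.mono (hsub a b ha hb))
      (fun x hx => (hpos x (hsub a b ha hb hx)).ne')).intervalIntegrable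
  have hint2 : ∀ a b : ℝ, 1 ≤ a → 1 ≤ b →
      IntervalIntegrable (fun s => φd s / φ s) volume a b := by
    intro a b ha hb
    exact ((hcont.mono (hsub a b ha hb)).div (hφcont.mono (hsub a b ha hb))
      (fun x hx => (hpos x (hsub a b ha hb hx)).ne')).intervalIntegrable
  -- H increments
  have hHdiff : ∀ a b : ℝ, 1 ≤ a → 1 ≤ b → H b - H a = ∫ s in a..b, 1 / φ s := by
    intro a b ha hb
    rw [hH a, hH b]
    exact intervalIntegral.integral_interval_sub_left (hint1 1 b le_rfl hb)
      (hint1 1 a le_rfl ha)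
  have hH1 : H 1 = 0 := by rw [hH]; simp
  have hHlt : ∀ a b : ℝ, 1 ≤ a → a < b → H a < H b := by
    intro a b ha hab
    have h := hHdiff a b ha (le_trans ha hab.le)
    have : 0 < ∫ s in a..b, 1 / φ s := by
      apply intervalIntegral.intervalIntegral_pos_of_pos_on
        (hint1 a b ha (le_trans ha hab.le))
      · intro x hx
        exact one_div_pos.2 (hpos x (le_trans ha hx.1.le))
      · exact hab
    linarith
  have hHle : ∀ a b : ℝ, 1 ≤ a → 1 ≤ b → H a ≤ H b → a ≤ b := by
    intro a b ha hb hab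
    by_contra h
    exact absurd hab (not_le.2 (hHlt b a hb (not_le.1 h)))
  -- FTC for log ∘ φ
  have hlog : ∀ a b : ℝ, 1 ≤ a → a ≤ b →
      (∫ s in a..b, φd s / φ s) = Real.log (φ b) - Real.log (φ a) := by
    intro a b ha hab
    have hb : (1:ℝ) ≤ b := le_trans ha hab
    apply intervalIntegral.integral_eq_sub_of_hasDeriv_right_of_le hab
    · apply ContinuousOn.log
      · exact hφcont.mono (fun x hx => le_trans ha hx.1)
      · intro x hx
        exact (hpos x (le_trans ha hx.1)).ne'
    · intro x hx
      have hx1 : (1:ℝ) ≤ x := le_trans ha hx.1.le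
      have := (hderiv x hx1).log (hpos x hx1).ne'
      exact this.mono (fun y hy => le_trans hx1 hy.le)
    · exact hint2 a b ha hb
  have hconstmul : ∀ (c : ℝ) (a b : ℝ), (∫ s in a..b, c / φ s) = c * ∫ s in a..b, 1 / φ s := by
    intro c a b
    rw [← intervalIntegral.integral_const_mul]
    congr 1; ext s; ring
  -- upper and lower bounds of ∫ φd/φ by constants
  have hup : ∀ a b : ℝ, 1 ≤ a → a ≤ b →
      (∫ s in a..b, φd s / φ s) ≤ φd a * ∫ s in a..b, 1 / φ s := by
    intro a b ha hab
    rw [← hconstmul]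
    apply intervalIntegral.integral_mono_on hab (hint2 a b ha (le_trans ha hab))
      (hintc (φd a) a b ha (le_trans ha hab))
    intro x hx
    have hx1 : (1:ℝ) ≤ x := le_trans ha hx.1
    exact (div_le_div_iff_of_pos_right (hpos x hx1)).2 (hanti a ha x hx1 hx.1)
  have hlow : ∀ a b : ℝ, 1 ≤ a → a ≤ b →
      φd b * (∫ s in a..b, 1 / φ s) ≤ ∫ s in a..b, φd s / φ s := by
    intro a b ha hab
    have hb : (1:ℝ) ≤ b := le_trans ha hab
    rw [← hconstmul]
    apply intervalIntegral.integral_mono_on hab (hintc (φd b) a b ha hb)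
      (hint2 a b ha hb)
    intro x hx
    have hx1 : (1:ℝ) ≤ x := le_trans ha hx.1
    exact (div_le_div_iff_of_pos_right (hpos x hx1)).2 (hanti x hx1 b hb hx.2)
  have hInonneg : ∀ a b : ℝ, 1 ≤ a → a ≤ b → 0 ≤ ∫ s in a..b, 1 / φ s := by
    intro a b ha hab
    exact intervalIntegral.integral_nonneg hab
      (fun x hx => (one_div_pos.2 (hpos x (le_trans ha hx.1))).le)
  -- key comparison lemma
  have key : ∀ p q p' q' : ℝ, 1 ≤ p → p ≤ q → 1 ≤ p' → p ≤ p' → p' ≤ q' → q ≤ q' →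
      (∫ s in p..q, 1 / φ s) = (∫ s in p'..q', 1 / φ s) →
      (∫ s in p'..q', φd s / φ s) ≤ ∫ s in p..q, φd s / φ s := by
    intro p q p' q' hp hpq hp' hpp' hp'q' hqq' heq
    have hq : (1:ℝ) ≤ q := le_trans hp hpq
    have hq' : (1:ℝ) ≤ q' := le_trans hp' hp'q'
    rcases le_total q p' with hcase | hcase
    · calc (∫ s in p'..q', φd s / φ s)
          ≤ φd p' * ∫ s in p'..q', 1 / φ s := hup p' q' hp' hp'q'
        _ = φd p' * ∫ s in p..q, 1 / φ s := by rw [heq]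
        _ ≤ φd q * ∫ s in p..q, 1 / φ s :=
            mul_le_mul_of_nonneg_right (hanti q hq p' hp' hcase) (hInonneg p q hp hpq)
        _ ≤ ∫ s in p..q, φd s / φ s := hlow p q hp hpq
    · have add1 := intervalIntegral.integral_add_adjacent_intervals
        (hint1 p p' hp hp') (hint1 p' q hp' hq)
      have add2 := intervalIntegral.integral_add_adjacent_intervals
        (hint1 p' q hp' hq) (hint1 q q' hq hq')
      have addA := intervalIntegral.integral_add_adjacent_intervals
        (hint2 p p' hp hp') (hint2 p' q hp' hq)
      have addB := intervalIntegral.integral_add_adjacent_intervals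
        (hint2 p' q hp' hq) (hint2 q q' hq hq')
      have taileq : (∫ s in q..q', 1 / φ s) = ∫ s in p..p', 1 / φ s := by linarith
      have tail : (∫ s in q..q', φd s / φ s) ≤ ∫ s in p..p', φd s / φ s := by
        calc (∫ s in q..q', φd s / φ s)
            ≤ φd q * ∫ s in q..q', 1 / φ s := hup q q' hq hqq'
          _ = φd q * ∫ s in p..p', 1 / φ s := by rw [taileq]
          _ ≤ φd p' * ∫ s in p..p', 1 / φ s :=
              mul_le_mul_of_nonneg_right (hanti p' hp' q hq hcase) (hInonneg p p' hp hpp')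
          _ ≤ ∫ s in p..p', φd s / φ s := hlow p p' hp hpp'
      linarith
  intro k
  set c : ℝ := ((k + 1 : ℕ) : ℝ) with hcdef
  have hc : (0:ℝ) ≤ c := Nat.cast_nonneg _
  have hG0 : G 0 = 1 := by have h := hG1 1 le_rfl; rwa [hH1] at h
  constructor
  · rw [hH1, zero_add, hrφ 0, hG0]
  · intro u hu
    have hHu : 0 ≤ H u := by
      have h := hHdiff 1 u le_rfl hu
      rw [hH1] at h
      have := hInonneg 1 u le_rfl hu
      linarith
    obtain ⟨hHy1, hy1⟩ := hG2 c hc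
    obtain ⟨hHy2, hy2⟩ := hG2 (H u + c) (by linarith)
    have hy12 : G c ≤ G (H u + c) := by
      apply hHle _ _ hy1 hy2
      rw [hHy1, hHy2]; linarith
    have huy2 : u ≤ G (H u + c) := by
      apply hHle _ _ hu hy2
      rw [hHy2]; linarith
    have heqq : (∫ s in (1:ℝ)..u, 1 / φ s) = ∫ s in (G c)..(G (H u + c)), 1 / φ s := by
      rw [← hHdiff 1 u le_rfl hu, ← hHdiff (G c) (G (H u + c)) hy1 hy2]
      rw [hH1, hHy1, hHy2]; ring
    have hkey := key 1 u (G c) (G (H u + c)) le_rfl hu hy1 hy1 hy12 huy2 heqq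
    rw [hlog 1 u le_rfl hu, hlog (G c) (G (H u + c)) hy1 hy12] at hkey
    have hpy1 := hpos (G c) hy1
    have hpy2 := hpos (G (H u + c)) (le_trans hy1 hy12)
    have hpu := hpos u hu
    have hp1 := hpos 1 le_rfl
    rw [hrφ, hrφ, hH1, zero_add]
    rw [div_le_div_iff₀ hpu hp1]
    have hlogle : Real.log (φ (G (H u + c)) * φ 1) ≤ Real.log (φ (G c) * φ u) := by
      rw [Real.log_mul hpy2.ne' hp1.ne', Real.log_mul hpy1.ne' hpu.ne']
      linarith
    exact (Real.log_le_log_iff (by positivity) (by positivity)).1 hlogle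
end

section
/- Let P be a Markov kernel on a measurable space E, V : E → [1,∞) measurable, φ : [0,∞) → [0,∞) concave with φ(0) = 0, and suppose PV(x) ≤ V(x) − φ(V(x)) + b for all x ∈ E (with b < ∞). Let υ > φ^{-1}(2b) and set c = 1 − 2b/φ(υ) and C = {V ≤ υ}. Then for all x, y ∈ E: PV(x) + PV(y) ≤ V(x) + V(y) − c·φ(V(x) + V(y)) + 2b·1_{C×C}(x,y). -/
/-!
Adding the two drift inequalities and using subadditivity of `φ` gives
`PV(x) + PV(y) ≤ S - φ(S) + 2b` with `S = V(x) + V(y)`. On `C × C` it remains to use `c ≤ 1`.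
Off `C × C` one of `V(x), V(y)` exceeds `υ`, so `φ(S) ≥ φ(υ)` and the constant `2b = (1 - c) φ(υ)`
is absorbed into `(1 - c) φ(S)`.
-/

open Set MeasureTheory ProbabilityTheory

namespace ConcaveOn

variable {φ : ℝ → ℝ}

theorem mul_map_le_map_mul (hφ : ConcaveOn ℝ (Ici 0) φ) (hφ0 : 0 ≤ φ 0) {s t : ℝ}
    (hs : 0 ≤ s) (ht₀ : 0 ≤ t) (ht₁ : t ≤ 1) : t * φ s ≤ φ (t * s) := by
  have h := hφ.2 (mem_Ici.mpr hs) (mem_Ici.mpr le_rfl) ht₀ (sub_nonneg.mpr ht₁)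
    (add_sub_cancel t 1)
  simp only [smul_eq_mul, mul_zero, add_zero] at h
  nlinarith

theorem map_add_le (hφ : ConcaveOn ℝ (Ici 0) φ) (hφ0 : 0 ≤ φ 0) {a b : ℝ}
    (ha : 0 ≤ a) (hb : 0 ≤ b) : φ (a + b) ≤ φ a + φ b := by
  rcases (add_nonneg ha hb).eq_or_lt with hab | hab
  · obtain ⟨rfl, rfl⟩ : a = 0 ∧ b = 0 := ⟨by linarith, by linarith⟩
    simpa using hφ0
  · have hscale {u : ℝ} (hu : 0 ≤ u) (hus : u ≤ a + b) : u / (a + b) * φ (a + b) ≤ φ u := by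
      simpa [div_mul_cancel₀ u hab.ne'] using hφ.mul_map_le_map_mul hφ0 hab.le
        (div_nonneg hu hab.le) ((div_le_one hab).mpr hus)
    have hsplit : a / (a + b) * φ (a + b) + b / (a + b) * φ (a + b) = φ (a + b) := by
      field_simp
    linarith [hscale ha (by linarith), hscale hb (by linarith)]

end ConcaveOn

theorem le_add_of_notMem_prod_sublevel {E : Type*} {V : E → ℝ} (hV : ∀ x, 0 ≤ V x) {υ : ℝ}
    {x y : E} (h : (x, y) ∉ {x' | V x' ≤ υ} ×ˢ {y' | V y' ≤ υ}) : υ ≤ V x + V y := by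
  simp only [mem_prod, mem_ofPred_eq, not_and_or, not_le] at h
  rcases h with h | h <;> linarith [hV x, hV y]

theorem double_drift_from_single_drift_general
    {E : Type*} [MeasurableSpace E] (P : Kernel E E)
    (V : E → ℝ) (hV1 : ∀ x, 1 ≤ V x)
    (φ : ℝ → ℝ) (hconc : ConcaveOn ℝ (Set.Ici (0 : ℝ)) φ)
    (hmono : MonotoneOn φ (Set.Ici (0 : ℝ))) (hφ0 : φ 0 = 0)
    (b : ℝ) (hb : 0 < b)
    (hdrift : ∀ x, ∫ z, V z ∂(P x) ≤ V x - φ (V x) + b)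
    (υ : ℝ) (hυ : 1 ≤ υ) (hφυ : 2 * b < φ υ)
    (c : ℝ) (hc : c = 1 - 2 * b / φ υ) :
    ∀ x y : E,
      (∫ z, V z ∂(P x)) + ∫ z, V z ∂(P y)
        ≤ V x + V y - c * φ (V x + V y)
          + 2 * b * Set.indicator ({x' | V x' ≤ υ} ×ˢ {y' | V y' ≤ υ})
              (fun _ => (1 : ℝ)) (x, y) := by
  intro x y
  have hV0 (z : E) : (0 : ℝ) ≤ V z := by linarith [hV1 z]
  have hS := add_nonneg (hV0 x) (hV0 y)
  have hsum : (∫ z, V z ∂(P x)) + ∫ z, V z ∂(P y) ≤ V x + V y - φ (V x + V y) + 2 * b := by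
    linarith [hdrift x, hdrift y, hconc.map_add_le hφ0.ge (hV0 x) (hV0 y)]
  have hφυ_pos : 0 < φ υ := by linarith
  have hgap : 1 - c = 2 * b / φ υ := by rw [hc]; ring
  by_cases hC : (x, y) ∈ {x' | V x' ≤ υ} ×ˢ {y' | V y' ≤ υ}
  · rw [indicator_of_mem hC]
    have hφS : 0 ≤ φ (V x + V y) := hφ0 ▸ hmono self_mem_Ici hS hS
    have hc1 : 0 ≤ 1 - c := hgap ▸ by positivity
    nlinarith
  · rw [indicator_of_notMem hC, mul_zero, add_zero]
    have hφS : φ υ ≤ φ (V x + V y) :=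
      hmono (mem_Ici.mpr (by linarith)) hS (le_add_of_notMem_prod_sublevel hV0 hC)
    have hb_absorbed : 2 * b ≤ (1 - c) * φ (V x + V y) := by
      rw [hgap, div_mul_eq_mul_div, le_div_iff₀ hφυ_pos]
      exact mul_le_mul_of_nonneg_left hφS (by positivity)
    linarith

/-- from a single drift condition `PV ≤ V − φ∘V + b`, deduce a
double drift condition on the product space with small set `C × C`,
`C = {V ≤ υ}`, and constant `c = 1 − 2b/φ(υ)`. -/
theorem double_drift_from_single_drift
    {E : Type*} [MeasurableSpace E] (P : Kernel E E) [IsMarkovKernel P]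
    (V : E → ℝ) (hVmeas : Measurable V) (hV1 : ∀ x, 1 ≤ V x)
    (hVint : ∀ x, Integrable V (P x))
    (φ : ℝ → ℝ) (hconc : ConcaveOn ℝ (Set.Ici (0 : ℝ)) φ)
    (hmono : MonotoneOn φ (Set.Ici (0 : ℝ))) (hφ0 : φ 0 = 0)
    (b : ℝ) (hb : 0 < b)
    (hdrift : ∀ x, ∫ z, V z ∂(P x) ≤ V x - φ (V x) + b)
    (υ : ℝ) (hυ : 1 ≤ υ) (hφυ : 2 * b < φ υ)
    (c : ℝ) (hc : c = 1 - 2 * b / φ υ) :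
    ∀ x y : E,
      (∫ z, V z ∂(P x)) + ∫ z, V z ∂(P y)
        ≤ V x + V y - c * φ (V x + V y)
          + 2 * b * Set.indicator ({x' | V x' ≤ υ} ×ˢ {y' | V y' ≤ υ})
              (fun _ => (1 : ℝ)) (x, y) :=
  double_drift_from_single_drift_general P V hV1 φ hconc hmono hφ0 b hb hdrift υ hυ hφυ c hc
end

section
/- Let P be a Markov kernel, V : E → [1,∞), φ ∈ 𝔽 concave increasing with φ(0)=0, and suppose PV(x) + PV(y) ≤ V(x) + V(y) − φ(V(x)+V(y)) + b·1_Δ(x,y) for all x,y ∈ E. Fix x₀ ∈ E. Then for every n ≥ 1 and x ∈ E: (1/n)·∑_{k=0}^{n−1} P^k(φ∘V)(x) ≤ b + V(x₀) + V(x)/n. -/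
open Set MeasureTheory ProbabilityTheory

/-- Iterates of a Markov kernel: `kernelIter P n = P^n`. -/
noncomputable def kernelIter {E : Type*} [MeasurableSpace E]
    (P : Kernel E E) : ℕ → Kernel E E
  | 0 => Kernel.id
  | n + 1 => (kernelIter P n).comp P

section Aux

variable {E : Type*} [MeasurableSpace E] (P : Kernel E E) [IsMarkovKernel P]

instance kernelIter_markov (n : ℕ) : IsMarkovKernel (kernelIter P n) := by
  induction n with
  | zero => exact (by rw [kernelIter]; infer_instance)
  | succ n ih => rw [kernelIter]; infer_instance

lemma kernelIter_succ' (n : ℕ) :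
    kernelIter P (n + 1) = P.comp (kernelIter P n) := by
  induction n with
  | zero => show (kernelIter P 0).comp P = P.comp (kernelIter P 0)
            rw [kernelIter, Kernel.id_comp, Kernel.comp_id]
  | succ n ih =>
      show (kernelIter P (n+1)).comp P = _
      rw [ih, Kernel.comp_assoc]; congr 1

lemma integral_comp'' {α β γ : Type*} [MeasurableSpace α] [MeasurableSpace β]
    [MeasurableSpace γ]
    (η : Kernel β γ) [IsSFiniteKernel η] (κ : Kernel α β) [IsSFiniteKernel κ] (a : α)
    {f : γ → ℝ} (hfm : Measurable f) (hf : Integrable f ((η ∘ₖ κ) a)) :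
    ∫ z, f z ∂((η ∘ₖ κ) a) = ∫ y, ∫ z, f z ∂(η y) ∂(κ a) := by
  rw [Kernel.comp_eq_snd_compProd, Kernel.snd_apply] at hf ⊢
  rw [integral_map measurable_snd.aemeasurable hfm.aestronglyMeasurable,
    ProbabilityTheory.integral_compProd]
  · simp
  · exact (integrable_map_measure hfm.aestronglyMeasurable measurable_snd.aemeasurable).mp hf

end Aux

/-- under the double drift condition
`PV(x)+PV(y) ≤ V(x)+V(y) − φ(V(x)+V(y)) + b·1_Δ(x,y)` with `φ` increasing,
the Cesàro averages of `P^k(φ∘V)(x)` are bounded by `b + V(x₀) + V(x)/n`. -/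
theorem cesaro_bound_of_double_drift
    {E : Type*} [MeasurableSpace E] (P : Kernel E E) [IsMarkovKernel P]
    (V : E → ℝ) (hVmeas : Measurable V) (hV1 : ∀ x, 1 ≤ V x)
    (φ : ℝ → ℝ) (hφmono : MonotoneOn φ (Set.Ici (1 : ℝ)))
    (hφpos : ∀ u ≥ (1 : ℝ), 0 < φ u)
    (Δ : Set (E × E)) (hΔ : MeasurableSet Δ) (b : ℝ) (hb : 0 ≤ b)
    (hVint : ∀ k x, Integrable V ((kernelIter P k) x))
    (hφVint : ∀ k x, Integrable (fun z => φ (V z)) ((kernelIter P k) x))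
    (hdrift : ∀ x y : E,
      (∫ z, V z ∂(P x)) + ∫ z, V z ∂(P y)
        ≤ V x + V y - φ (V x + V y)
          + b * Set.indicator Δ (fun _ => (1 : ℝ)) (x, y))
    (x₀ : E) :
    ∀ n : ℕ, 1 ≤ n → ∀ x : E,
      (1 / (n : ℝ)) * ∑ k ∈ Finset.range n, ∫ z, φ (V z) ∂((kernelIter P k) x)
        ≤ b + V x₀ + V x / n := by
  set c : ℝ := b + V x₀ with hc
  -- pointwise single drift
  have hsingle : ∀ y : E, ∫ z, V z ∂(P y) ≤ V y - φ (V y) + c := by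
    intro y
    have h0 : (0:ℝ) ≤ ∫ z, V z ∂(P x₀) :=
      integral_nonneg fun z => le_trans zero_le_one (hV1 z)
    have hmem : V y ∈ Set.Ici (1:ℝ) := hV1 y
    have hmem2 : V y + V x₀ ∈ Set.Ici (1:ℝ) :=
      le_trans (hV1 y) (le_add_of_nonneg_right (le_trans zero_le_one (hV1 x₀)))
    have hphi : φ (V y) ≤ φ (V y + V x₀) :=
      hφmono hmem hmem2 (le_add_of_nonneg_right (le_trans zero_le_one (hV1 x₀)))
    have hind : Set.indicator Δ (fun _ => (1:ℝ)) (y, x₀) ≤ 1 := by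
      by_cases h : (y, x₀) ∈ Δ <;> simp [Set.indicator_apply, h]
    have hbind : b * Set.indicator Δ (fun _ => (1:ℝ)) (y, x₀) ≤ b :=
      (mul_le_of_le_one_right hb hind)
    have := hdrift y x₀
    linarith
  intro n hn x
  set a : ℕ → ℝ := fun k => ∫ z, V z ∂((kernelIter P k) x) with ha
  set e : ℕ → ℝ := fun k => ∫ z, φ (V z) ∂((kernelIter P k) x) with he
  have hstep : ∀ k, e k ≤ a k - a (k + 1) + c := by
    intro k
    have heq : a (k + 1) = ∫ y, (∫ z, V z ∂(P y)) ∂((kernelIter P k) x) := by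
      have h1 : a (k + 1) = ∫ z, V z ∂((P ∘ₖ (kernelIter P k)) x) := by
        simp only [ha]
        rw [kernelIter_succ' P k]
      rw [h1]
      exact integral_comp'' P (kernelIter P k) x hVmeas
        (by rw [← kernelIter_succ' P k]; exact hVint (k+1) x)
    have hgi : Integrable (fun y => V y - φ (V y) + c) ((kernelIter P k) x) :=
      ((hVint k x).sub (hφVint k x)).add (integrable_const c)
    have hmono : ∫ y, (∫ z, V z ∂(P y)) ∂((kernelIter P k) x)
        ≤ ∫ y, (V y - φ (V y) + c) ∂((kernelIter P k) x) := by
      refine integral_mono_of_nonneg ?_ hgi ?_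
      · exact Filter.Eventually.of_forall fun y =>
          integral_nonneg fun z => le_trans zero_le_one (hV1 z)
      · exact Filter.Eventually.of_forall hsingle
    have hsub : Integrable (fun y => V y - φ (V y)) ((kernelIter P k) x) :=
      (hVint k x).sub (hφVint k x)
    have hrhs : ∫ y, (V y - φ (V y) + c) ∂((kernelIter P k) x) = a k - e k + c := by
      rw [integral_add hsub (integrable_const c),
        integral_sub (hVint k x) (hφVint k x), integral_const]
      simp [ha, he]
    have : a (k + 1) ≤ a k - e k + c := by rw [heq]; rw [hrhs] at hmono; exact hmono
    linarith
  have hsum : ∑ k ∈ Finset.range n, e k ≤ a 0 - a n + n * c := by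
    calc ∑ k ∈ Finset.range n, e k
        ≤ ∑ k ∈ Finset.range n, (a k - a (k + 1) + c) :=
          Finset.sum_le_sum fun k _ => hstep k
      _ = (∑ k ∈ Finset.range n, (a k - a (k + 1))) + n * c := by
          rw [Finset.sum_add_distrib, Finset.sum_const, Finset.card_range]
          ring
      _ = a 0 - a n + n * c := by rw [Finset.sum_range_sub' a]
  have ha0 : a 0 = V x := by
    simp only [ha, kernelIter]
    rw [Kernel.id_apply, integral_dirac' V x hVmeas.stronglyMeasurable]
  have han : 0 ≤ a n := integral_nonneg fun z => le_trans zero_le_one (hV1 z)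
  have hsum2 : ∑ k ∈ Finset.range n, e k ≤ V x + n * c := by
    rw [ha0] at hsum; linarith
  have hnpos : (0:ℝ) < n := by exact_mod_cast hn
  have := mul_le_mul_of_nonneg_left hsum2 (le_of_lt (one_div_pos.mpr hnpos))
  calc (1 / (n : ℝ)) * ∑ k ∈ Finset.range n, e k
      ≤ (1 / (n : ℝ)) * (V x + n * c) := this
    _ = c + V x / n := by field_simp; ring
    _ = b + V x₀ + V x / n := by rw [hc]
end
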